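/- Let ℓ ≥ 1 and k ≥ 1 be integers, and let ψ be any proper 3-coloring of the graph T(u,v,k,ℓ). Then ψ(x_j) = ψ(y_j) holds for all but at most 2^ℓ of the 3^ℓ leaf pairs (x_j, y_j). -/

import Mathlib

/-- The base relation for the graph `P(u,v,b)`: vertices are `Sum.inl 0 = u`,
`Sum.inl 1 = v`, and `Sum.inr i = v_{i+1}` (0-indexed path vertices).
Edges: consecutive path vertices, `u` to odd-numbered path vertices `v₁, v₃, …`
(even 0-based index), and `v` to even-numbered ones `v₂, v₄, …`. -/
def PAdj (b : ℕ) : (Fin 2 ⊕ Fin b) → (Fin 2 ⊕ Fin b) → Prop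
  | Sum.inr i, Sum.inr j => (j : ℕ) = (i : ℕ) + 1
  | Sum.inl x, Sum.inr i => (x : ℕ) = (i : ℕ) % 2
  | _, _ => False

/-- The graph `P(u,v,b)`. -/
def Pgraph (b : ℕ) : SimpleGraph (Fin 2 ⊕ Fin b) := SimpleGraph.fromRel (PAdj b)

/-- The set of proper 3-colorings of a graph `G`. -/
def properColorings {V : Type*} (G : SimpleGraph V) : Set (V → Fin 3) :=
  {ψ | ∀ a b, G.Adj a b → ψ a ≠ ψ b}

/-- The type of "inner" vertices of `T(u,v,k,ℓ)` (all vertices except the two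
special vertices `u, v`). At level `0` these are the `2^k` path vertices of
`P(u,v,2^k)`; at level `ℓ+1` they are the five path vertices `v₁,…,v₅` of the
base copy of `P(u,v,5)` together with the inner vertices of the three glued
copies of `T(·,·,k,ℓ)`. -/
def TInner (k : ℕ) : ℕ → Type
  | 0 => Fin (2 ^ k)
  | ℓ + 1 => Fin 5 ⊕ (Fin 3 × TInner k ℓ)

/-- The vertex type of `T(u,v,k,ℓ)`: the special vertices `u = Sum.inl 0`,
`v = Sum.inl 1` together with the inner vertices. -/
abbrev TVert (k ℓ : ℕ) : Type := Fin 2 ⊕ TInner k ℓ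

/-- The pair of path vertices of `P(u,v,5)` onto which the `c`-th copy of
`T(·,·,k,ℓ-1)` is glued: `(v₁,v₃)` for `c = 0`, `(v₂,v₄)` for `c = 1`,
`(v₃,v₅)` for `c = 2` (0-indexed). -/
def gluePair (c : Fin 3) : Fin 5 × Fin 5 :=
  (⟨c.val, by omega⟩, ⟨c.val + 2, by have := c.isLt; omega⟩)

/-- The embedding of the `c`-th copy of `T(·,·,k,ℓ)` into `T(u,v,k,ℓ+1)`:
its special vertices are identified with the glue pair, and its inner vertices
are tagged with `c`. -/
def embedT (k ℓ : ℕ) (c : Fin 3) : TVert k ℓ → TVert k (ℓ + 1)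
  | Sum.inl x => if x = 0 then Sum.inr (Sum.inl (gluePair c).1)
                 else Sum.inr (Sum.inl (gluePair c).2)
  | Sum.inr w => Sum.inr (Sum.inr (c, w))

/-- The embedding of the base copy of `P(u,v,5)` into `T(u,v,k,ℓ+1)`. -/
def embedP (k ℓ : ℕ) : (Fin 2 ⊕ Fin 5) → TVert k (ℓ + 1)
  | Sum.inl x => Sum.inl x
  | Sum.inr y => Sum.inr (Sum.inl y)

/-- The graph `T(u,v,k,ℓ)`, defined recursively: `T(u,v,k,0) = P(u,v,2^k)`, and
`T(u,v,k,ℓ+1)` is obtained from `P(u,v,5)` by gluing three copies of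
`T(·,·,k,ℓ)` onto the pairs `(v₁,v₃)`, `(v₂,v₄)`, `(v₃,v₅)`. -/
def TGraph (k : ℕ) : (ℓ : ℕ) → SimpleGraph (TVert k ℓ)
  | 0 => Pgraph (2 ^ k)
  | ℓ + 1 => SimpleGraph.fromRel (fun a b =>
      (∃ x y, (Pgraph 5).Adj x y ∧ a = embedP k ℓ x ∧ b = embedP k ℓ y) ∨
      (∃ c x y, (TGraph k ℓ).Adj x y ∧ a = embedT k ℓ c x ∧ b = embedT k ℓ c y))

/-- The leaf pairs of `T(u,v,k,ℓ)`: the `3^ℓ` copies of `P(x,y,2^k)` inside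
`T(u,v,k,ℓ)` are indexed by sequences `s : Fin ℓ → Fin 3` recording which of the
three glued copies is taken at each level; `leafPair k ℓ s` is the pair
`(x_s, y_s)` of special vertices of the corresponding copy. -/
def leafPair (k : ℕ) : (ℓ : ℕ) → (Fin ℓ → Fin 3) → TVert k ℓ × TVert k ℓ
  | 0, _ => (Sum.inl 0, Sum.inl 1)
  | ℓ + 1, s => (embedT k ℓ (s 0) (leafPair k ℓ (fun i => s i.succ)).1,
                 embedT k ℓ (s 0) (leafPair k ℓ (fun i => s i.succ)).2)

/-
In `P(u,v,5)` the path vertices at odd positions avoid the color of `u` and those at even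
positions avoid the color of `v`. With three colors this forces one of the glue pairs
`(v₁,v₃)`, `(v₂,v₄)`, `(v₃,v₅)` to be monochromatic, and all three when `ψ u = ψ v`, since the
path is then 2-colored and alternates. Hence a monochromatic special pair makes every leaf pair
below it monochromatic, and at each level at most two of the three glued copies contain
bichromatic leaf pairs, which gives the bound `2 ^ ℓ`.
-/

instance (b : ℕ) : DecidableRel (PAdj b)
  | Sum.inr i, Sum.inr j => inferInstanceAs (Decidable ((j : ℕ) = (i : ℕ) + 1))
  | Sum.inl x, Sum.inr i => inferInstanceAs (Decidable ((x : ℕ) = (i : ℕ) % 2))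
  | Sum.inl _, Sum.inl _ => isFalse id
  | Sum.inr _, Sum.inl _ => isFalse id

instance (b : ℕ) : DecidableRel (Pgraph b).Adj := fun p q =>
  decidable_of_iff _ (SimpleGraph.fromRel_adj (PAdj b) p q).symm

theorem comp_mem_properColorings {V W : Type*} {G : SimpleGraph V} {H : SimpleGraph W}
    (f : G →g H) {ψ : W → Fin 3} (hψ : ψ ∈ properColorings H) :
    ψ ∘ f ∈ properColorings G :=
  fun _ _ h => hψ _ _ (f.map_adj h)

section Pgraph5

variable {φ : Fin 2 ⊕ Fin 5 → Fin 3} (hφ : φ ∈ properColorings (Pgraph 5))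
include hφ

theorem Pgraph_five_exists_gluePair_color_eq :
    ∃ c : Fin 3, φ (.inr (gluePair c).1) = φ (.inr (gluePair c).2) := by
  have key : ∀ u v a b c d e : Fin 3, u ≠ a → u ≠ c → u ≠ e → v ≠ b → v ≠ d →
      a ≠ b → b ≠ c → c ≠ d → d ≠ e → a = c ∨ b = d ∨ c = e := by decide
  rcases key (φ (.inl 0)) (φ (.inl 1)) (φ (.inr 0)) (φ (.inr 1)) (φ (.inr 2)) (φ (.inr 3))
    (φ (.inr 4)) (hφ _ _ (by decide)) (hφ _ _ (by decide)) (hφ _ _ (by decide))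
    (hφ _ _ (by decide)) (hφ _ _ (by decide)) (hφ _ _ (by decide)) (hφ _ _ (by decide))
    (hφ _ _ (by decide)) (hφ _ _ (by decide)) with h | h | h
  exacts [⟨0, h⟩, ⟨1, h⟩, ⟨2, h⟩]

theorem Pgraph_five_gluePair_color_eq (huv : φ (.inl 0) = φ (.inl 1)) (c : Fin 3) :
    φ (.inr (gluePair c).1) = φ (.inr (gluePair c).2) := by
  have key : ∀ u a b c d e : Fin 3, u ≠ a → u ≠ c → u ≠ e → u ≠ b → u ≠ d →
      a ≠ b → b ≠ c → c ≠ d → d ≠ e → a = c ∧ b = d ∧ c = e := by decide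
  have := key (φ (.inl 0)) (φ (.inr 0)) (φ (.inr 1)) (φ (.inr 2)) (φ (.inr 3)) (φ (.inr 4))
    (hφ _ _ (by decide)) (hφ _ _ (by decide)) (hφ _ _ (by decide))
    (huv ▸ hφ _ _ (by decide)) (huv ▸ hφ _ _ (by decide)) (hφ _ _ (by decide))
    (hφ _ _ (by decide)) (hφ _ _ (by decide)) (hφ _ _ (by decide))
  fin_cases c
  exacts [this.1, this.2.1, this.2.2]

end Pgraph5

section Embeddings

variable (k ℓ : ℕ)

theorem embedP_injective : Function.Injective (embedP k ℓ) := by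
  rintro (x | x) (y | y) h
  · exact congrArg _ (Sum.inl.inj h)
  · cases h
  · cases h
  · exact congrArg _ (Sum.inl.inj (Sum.inr.inj h))

theorem embedT_injective (c : Fin 3) : Function.Injective (embedT k ℓ c) := by
  rintro (x | x) (y | y) h
  · have hne : (gluePair c).1 ≠ (gluePair c).2 := by simp [gluePair, Fin.ext_iff]
    fin_cases x <;> fin_cases y <;> simp only [embedT] at h
    exacts [rfl, (hne (Sum.inl.inj (Sum.inr.inj h))).elim,
      (hne (Sum.inl.inj (Sum.inr.inj h)).symm).elim, rfl]
  · simp only [embedT] at h; split_ifs at h <;> cases h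
  · simp only [embedT] at h; split_ifs at h <;> cases h
  · exact congrArg _ (congrArg Prod.snd (Sum.inr.inj (Sum.inr.inj h)))

def embedPHom : Pgraph 5 →g TGraph k (ℓ + 1) where
  toFun := embedP k ℓ
  map_rel' {x y} h := by
    rw [TGraph, SimpleGraph.fromRel_adj]
    exact ⟨(embedP_injective k ℓ).ne h.ne, .inl (.inl ⟨x, y, h, rfl, rfl⟩)⟩

def embedTHom (c : Fin 3) : TGraph k ℓ →g TGraph k (ℓ + 1) where
  toFun := embedT k ℓ c
  map_rel' {x y} h := by
    rw [TGraph.eq_2, SimpleGraph.fromRel_adj]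
    exact ⟨(embedT_injective k ℓ c).ne h.ne, .inl (.inr ⟨c, x, y, h, rfl, rfl⟩)⟩

end Embeddings

theorem card_subtype_fin_succ_pi {n : ℕ} {β : Type*} [Fintype β]
    (p : (Fin (n + 1) → β) → Prop) :
    Nat.card {s // p s} = ∑ c, Nat.card {t : Fin n → β // p (Fin.cons c t)} := by
  rw [← Nat.card_sigma]
  exact Nat.card_congr (((Fin.consEquiv fun _ => β).subtypeEquiv fun _ => Iff.rfl).symm.trans
    (Equiv.subtypeProdEquivSigmaSubtype fun c t => p (Fin.cons c t)))

abbrev bichromaticLeaves {k ℓ : ℕ} (ψ : TVert k ℓ → Fin 3) : Type :=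
  {s : Fin ℓ → Fin 3 // ψ (leafPair k ℓ s).1 ≠ ψ (leafPair k ℓ s).2}

theorem card_bichromaticLeaves_succ {k ℓ : ℕ} (ψ : TVert k (ℓ + 1) → Fin 3) :
    Nat.card (bichromaticLeaves ψ) = ∑ c, Nat.card (bichromaticLeaves (ψ ∘ embedT k ℓ c)) :=
  card_subtype_fin_succ_pi _

section Restriction

variable {k ℓ : ℕ} {ψ : TVert k (ℓ + 1) → Fin 3}
  (hψ : ψ ∈ properColorings (TGraph k (ℓ + 1)))
include hψ

theorem comp_embedP_mem_properColorings : ψ ∘ embedP k ℓ ∈ properColorings (Pgraph 5) :=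
  comp_mem_properColorings (embedPHom k ℓ) hψ

theorem comp_embedT_mem_properColorings (c : Fin 3) :
    ψ ∘ embedT k ℓ c ∈ properColorings (TGraph k ℓ) :=
  comp_mem_properColorings (embedTHom k ℓ c) hψ

end Restriction

theorem isEmpty_bichromaticLeaves {k ℓ : ℕ} {ψ : TVert k ℓ → Fin 3}
    (hψ : ψ ∈ properColorings (TGraph k ℓ)) (huv : ψ (.inl 0) = ψ (.inl 1)) :
    IsEmpty (bichromaticLeaves ψ) := by
  induction ℓ with
  | zero => exact ⟨fun s => s.2 huv⟩
  | succ ℓ ih =>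
    refine ⟨fun s => ?_⟩
    have := ih (comp_embedT_mem_properColorings hψ (s.1 0))
      (Pgraph_five_gluePair_color_eq (comp_embedP_mem_properColorings hψ) huv (s.1 0))
    exact this.false ⟨Fin.tail s.1, s.2⟩

theorem stmt8_general (k ℓ : ℕ)
    (ψ : TVert k ℓ → Fin 3) (hψ : ψ ∈ properColorings (TGraph k ℓ)) :
    Nat.card {s : Fin ℓ → Fin 3 //
      ψ (leafPair k ℓ s).1 ≠ ψ (leafPair k ℓ s).2} ≤ 2 ^ ℓ := by
  change Nat.card (bichromaticLeaves ψ) ≤ 2 ^ ℓ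
  induction ℓ with
  | zero => exact Finite.card_le_one_iff_subsingleton.2 inferInstance
  | succ ℓ ih =>
    obtain ⟨c₀, hc₀⟩ :=
      Pgraph_five_exists_gluePair_color_eq (comp_embedP_mem_properColorings hψ)
    have hzero : Nat.card (bichromaticLeaves (ψ ∘ embedT k ℓ c₀)) = 0 :=
      have := isEmpty_bichromaticLeaves (comp_embedT_mem_properColorings hψ c₀) hc₀
      Nat.card_of_isEmpty
    calc Nat.card (bichromaticLeaves ψ)
        = ∑ c ∈ Finset.univ.erase c₀, Nat.card (bichromaticLeaves (ψ ∘ embedT k ℓ c)) := by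
          rw [card_bichromaticLeaves_succ, ← Finset.add_sum_erase _ _ (Finset.mem_univ c₀), hzero,
            zero_add]
      _ ≤ (Finset.univ.erase c₀).card • 2 ^ ℓ :=
          Finset.sum_le_card_nsmul _ _ _ fun c _ => ih _ (comp_embedT_mem_properColorings hψ c)
      _ = 2 ^ (ℓ + 1) := by simp [pow_succ, mul_comm]

/-- Lemma 3 (main step): for `ℓ, k ≥ 1` and any proper 3-coloring `ψ` of
`T(u,v,k,ℓ)`, the number of leaf pairs `(x_j, y_j)` with `ψ(x_j) ≠ ψ(y_j)` is at
most `2^ℓ` (out of the `3^ℓ` leaf pairs in total). -/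
theorem stmt8 (k ℓ : ℕ) (hk : 1 ≤ k) (hℓ : 1 ≤ ℓ)
    (ψ : TVert k ℓ → Fin 3) (hψ : ψ ∈ properColorings (TGraph k ℓ)) :
    Nat.card {s : Fin ℓ → Fin 3 //
      ψ (leafPair k ℓ s).1 ≠ ψ (leafPair k ℓ s).2} ≤ 2 ^ ℓ :=
  stmt8_general k ℓ ψ hψ
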